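/- arXiv:2302.12981 — 4 statements merged into one kernel-verified Lean document; each statement's English description precedes it below -/
import Mathlib

section
/- Let R_n = Q_n / P_n be a sequence of real rational functions on [-1,1], where P_n, Q_n are polynomials of degree ≤ d and P_n has no zero on [-1,1]. Suppose there are C₀, σ > 0 and, for each n, points t_{0,n}, …, t_{d,n} ∈ [-1,1] with pairwise distances > σ such that |R_n(t_{i,n})| ≤ C₀ for all i. Then there exist a subsequence (n_j), points s_1, …, s_d in the closed complex disk of radius 2, and a rational function R_∞ of numerator and denominator degree ≤ d whose poles lie in {s_1, …, s_d}, such that R_{n_j} → R_∞ uniformly on compact subsets of {|z| ≤ 2} \ {s_1, …, s_d}. -/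
open Polynomial Finset Filter


lemma coeff_prod_X_sub_C_le {ι : Type*} (s : Finset ι) (a : ι → ℝ)
    (ha : ∀ j ∈ s, |a j| ≤ 1) (k : ℕ) :
    |(∏ j ∈ s, (X - C (a j))).coeff k| ≤ 2 ^ s.card := by
  classical
  induction s using Finset.induction_on generalizing k with
  | empty => simp [Polynomial.coeff_one]; split <;> norm_num
  | @insert i s his ih =>
    have ha' : ∀ j ∈ s, |a j| ≤ 1 := fun j hj => ha j (mem_insert_of_mem hj)
    have hai : |a i| ≤ 1 := ha i (mem_insert_self _ _)
    rw [Finset.prod_insert his]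
    set p := ∏ j ∈ s, (X - C (a j))
    have hexp : ((X - C (a i)) * p).coeff k
        = (X * p).coeff k - a i * p.coeff k := by
      rw [sub_mul, Polynomial.coeff_sub, Polynomial.coeff_C_mul]
    rw [hexp, Finset.card_insert_of_notMem his, pow_succ]
    have h1 : |(X * p).coeff k| ≤ 2 ^ s.card := by
      cases k with
      | zero =>
          simp only [Polynomial.coeff_X_mul_zero, abs_zero]
          positivity
      | succ m => rw [Polynomial.coeff_X_mul]; exact ih ha' m
    calc |(X * p).coeff k - a i * p.coeff k|
        ≤ |(X * p).coeff k| + |a i * p.coeff k| := abs_sub _ _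
      _ ≤ 2 ^ s.card + 1 * 2 ^ s.card := by
          gcongr
          · rw [abs_mul]
            have := ih ha' k
            have h2 : |a i| * |p.coeff k| ≤ 1 * 2 ^ s.card := by
              apply mul_le_mul hai this (abs_nonneg _) zero_le_one
            linarith
      _ = 2 ^ s.card * 2 := by ring

lemma coeff_bound_of_values (d : ℕ) (f : ℝ[X]) (hf : f.natDegree ≤ d)
    (v : Fin (d+1) → ℝ) (hv1 : ∀ i, |v i| ≤ 1) (σ : ℝ) (hσ : 0 < σ)
    (hsep : ∀ i j, i ≠ j → σ < |v i - v j|) (M : ℝ)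
    (hval : ∀ i, |f.eval (v i)| ≤ M) (k : ℕ) :
    |f.coeff k| ≤ (d+1) * M * (2^d / σ^d) := by
  classical
  have hM : 0 ≤ M := le_trans (abs_nonneg _) (hval 0)
  have hvinj : Set.InjOn v (univ : Finset (Fin (d+1))) := by
    intro i _ j _ hij
    by_contra hne
    have := hsep i j (by simpa using hne)
    rw [hij, sub_self, abs_zero] at this; linarith
  rcases eq_or_ne f 0 with rfl | hf0
  · simp only [Polynomial.coeff_zero, abs_zero]
    positivity
  have hdeg : f.degree < (univ : Finset (Fin (d+1))).card := by
    rw [Finset.card_univ, Fintype.card_fin]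
    exact lt_of_le_of_lt (Polynomial.degree_le_natDegree)
      (by exact_mod_cast Nat.lt_succ_of_le hf)
  have hrep := Lagrange.eq_interpolate hvinj hdeg
  -- basis coefficient bound
  have hbasis : ∀ i : Fin (d+1), ∀ k,
      |(Lagrange.basis univ v i).coeff k| ≤ 2^d / σ^d := by
    intro i k
    rw [Lagrange.basis]
    have : ∀ j ∈ univ.erase i, Lagrange.basisDivisor (v i) (v j)
        = C ((v i - v j)⁻¹) * (X - C (v j)) := fun j _ => rfl
    rw [Finset.prod_congr rfl this, Finset.prod_mul_distrib, ← map_prod,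
      Polynomial.coeff_C_mul, abs_mul]
    have hcard : (univ.erase i).card = d := by
      rw [Finset.card_erase_of_mem (mem_univ i), Finset.card_univ, Fintype.card_fin]
      rfl
    have h1 : |∏ j ∈ univ.erase i, (v i - v j)⁻¹| ≤ (σ⁻¹)^d := by
      rw [Finset.abs_prod]
      calc ∏ j ∈ univ.erase i, |(v i - v j)⁻¹|
          ≤ ∏ _j ∈ univ.erase i, σ⁻¹ := by
            apply Finset.prod_le_prod (fun j _ => abs_nonneg _)
            intro j hj
            rw [abs_inv]
            exact inv_anti₀ hσ (le_of_lt (hsep i j (Finset.ne_of_mem_erase hj).symm))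
        _ = (σ⁻¹)^d := by rw [Finset.prod_const, hcard]
    have h2 : |(∏ j ∈ univ.erase i, (X - C (v j))).coeff k| ≤ 2^d := by
      have := coeff_prod_X_sub_C_le (univ.erase i) v (fun j _ => hv1 j) k
      rwa [hcard] at this
    calc |∏ j ∈ univ.erase i, (v i - v j)⁻¹| * |(∏ j ∈ univ.erase i, (X - C (v j))).coeff k|
        ≤ (σ⁻¹)^d * 2^d := by
          apply mul_le_mul h1 h2 (abs_nonneg _) (by positivity)
      _ = 2^d / σ^d := by rw [inv_pow]; field_simp
  calc |f.coeff k| = |(Lagrange.interpolate univ v (fun i => f.eval (v i))).coeff k| := by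
        rw [← hrep]
    _ ≤ (d+1) * M * (2^d / σ^d) := by
        rw [Lagrange.interpolate_apply, Polynomial.finset_sum_coeff]
        calc |∑ i : Fin (d+1), (C (f.eval (v i)) * Lagrange.basis univ v i).coeff k|
            ≤ ∑ i : Fin (d+1), |(C (f.eval (v i)) * Lagrange.basis univ v i).coeff k| :=
              Finset.abs_sum_le_sum_abs _ _
          _ ≤ ∑ _i : Fin (d+1), M * (2^d / σ^d) := by
              apply Finset.sum_le_sum
              intro i _
              rw [Polynomial.coeff_C_mul, abs_mul]
              exact mul_le_mul (hval i) (hbasis i k) (abs_nonneg _) hM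
          _ = (d+1) * (M * (2^d / σ^d)) := by
              rw [Finset.sum_const, Finset.card_univ, Fintype.card_fin, nsmul_eq_mul]
              push_cast; ring
          _ = (d+1) * M * (2^d / σ^d) := by ring


lemma eval_abs_le (d : ℕ) (f : ℝ[X]) (hf : f.natDegree ≤ d) (c : ℝ)
    (hc : ∀ k, |f.coeff k| ≤ c) {x : ℝ} (hx : |x| ≤ 1) :
    |f.eval x| ≤ (d+1) * c := by
  rw [Polynomial.eval_eq_sum_range' (Nat.lt_succ_of_le hf)]
  calc |∑ i ∈ Finset.range (d+1), f.coeff i * x ^ i|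
      ≤ ∑ i ∈ Finset.range (d+1), |f.coeff i * x ^ i| := Finset.abs_sum_le_sum_abs _ _
    _ ≤ ∑ _i ∈ Finset.range (d+1), c := by
        apply Finset.sum_le_sum
        intro i _
        rw [abs_mul, abs_pow]
        calc |f.coeff i| * |x| ^ i ≤ c * 1 ^ i := by
              apply mul_le_mul (hc i) (pow_le_pow_left₀ (abs_nonneg _) hx i)
                (by positivity) (le_trans (abs_nonneg _) (hc 0))
          _ = c := by rw [one_pow, mul_one]
    _ = (d+1) * c := by rw [Finset.sum_const, Finset.card_range, nsmul_eq_mul]; push_cast; ring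

lemma tuo_div {K : Set ℂ} {F G : ℕ → ℂ → ℂ} {f g : ℂ → ℂ}
    (hF : TendstoUniformlyOn F f Filter.atTop K)
    (hG : TendstoUniformlyOn G g Filter.atTop K)
    {ε M : ℝ} (hε : 0 < ε) (hgl : ∀ z ∈ K, ε ≤ ‖g z‖)
    (hfb : ∀ z ∈ K, ‖f z‖ ≤ M) (hgb : ∀ z ∈ K, ‖g z‖ ≤ M) :
    TendstoUniformlyOn (fun j z => F j z / G j z) (fun z => f z / g z) Filter.atTop K := by
  rcases K.eq_empty_or_nonempty with rfl | ⟨z₀, hz₀⟩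
  · rw [Metric.tendstoUniformlyOn_iff]
    intro ε' hε'
    exact Filter.Eventually.of_forall (fun j z hz => absurd hz (Set.notMem_empty z))
  have hM : 0 < M := lt_of_lt_of_le hε (le_trans (hgl z₀ hz₀) (hgb z₀ hz₀))
  rw [Metric.tendstoUniformlyOn_iff]
  intro ε' hε'
  set δ := min (ε/2) (ε' * ε^2 / (8 * (M+1))) with hδdef
  have hδ : 0 < δ := by
    apply lt_min (by positivity) (by positivity)
  have hδ1 : δ ≤ ε/2 := min_le_left _ _
  have hδ2 : δ ≤ ε' * ε^2 / (8 * (M+1)) := min_le_right _ _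
  have h1 := (Metric.tendstoUniformlyOn_iff.mp hF) δ hδ
  have h2 := (Metric.tendstoUniformlyOn_iff.mp hG) δ hδ
  filter_upwards [h1, h2] with j hj1 hj2 z hz
  have hF' : ‖f z - F j z‖ < δ := by rw [← dist_eq_norm]; exact hj1 z hz
  have hG' : ‖g z - G j z‖ < δ := by rw [← dist_eq_norm]; exact hj2 z hz
  have hgz : ε ≤ ‖g z‖ := hgl z hz
  have hGz : ε/2 ≤ ‖G j z‖ := by
    have := norm_sub_norm_le (g z) (G j z)
    linarith [le_of_lt hG']
  have hgne : g z ≠ 0 := fun h => by rw [h, norm_zero] at hgz; linarith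
  have hGne : G j z ≠ 0 := fun h => by rw [h, norm_zero] at hGz; linarith
  rw [dist_eq_norm]
  have key : f z / g z - F j z / G j z
      = (f z * (G j z - g z) + g z * (f z - F j z)) / (g z * G j z) := by
    field_simp
    ring
  rw [key, norm_div]
  have hnum : ‖f z * (G j z - g z) + g z * (f z - F j z)‖ ≤ 2 * M * δ := by
    calc ‖f z * (G j z - g z) + g z * (f z - F j z)‖
        ≤ ‖f z‖ * ‖G j z - g z‖ + ‖g z‖ * ‖f z - F j z‖ := by
          refine le_trans (norm_add_le _ _) ?_
          rw [norm_mul, norm_mul]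
      _ ≤ M * δ + M * δ := by
          have e1 : ‖G j z - g z‖ ≤ δ := by rw [norm_sub_rev]; linarith
          apply add_le_add
          · exact mul_le_mul (hfb z hz) e1 (norm_nonneg _) (le_of_lt hM)
          · exact mul_le_mul (hgb z hz) (le_of_lt hF') (norm_nonneg _) (le_of_lt hM)
      _ = 2 * M * δ := by ring
  have hden : ε^2/2 ≤ ‖g z * G j z‖ := by
    rw [norm_mul]
    calc ε^2/2 = ε * (ε/2) := by ring
      _ ≤ ‖g z‖ * ‖G j z‖ :=
          mul_le_mul hgz hGz (by positivity) (norm_nonneg _)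
  have hdenpos : (0:ℝ) < ‖g z * G j z‖ := lt_of_lt_of_le (by positivity) hden
  calc ‖f z * (G j z - g z) + g z * (f z - F j z)‖ / ‖g z * G j z‖
      ≤ 2 * M * δ / (ε^2/2) := by
        apply div_le_div₀ (by positivity) hnum (by positivity) hden
    _ < ε' := by
        rw [div_lt_iff₀ (by positivity)]
        have h3 : δ * (8 * (M+1)) ≤ ε' * ε^2 := by
          rw [← le_div_iff₀ (by positivity : (0:ℝ) < 8 * (M+1))]
          exact hδ2
        nlinarith [hδ.le, hε.le, hM.le, hε'.le]

lemma tuo_poly (d : ℕ) (c : ℕ → Fin (d+1) → ℝ) (L : Fin (d+1) → ℝ)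
    (hc : ∀ k, Filter.Tendsto (fun j => c j k) Filter.atTop (nhds (L k))) :
    TendstoUniformlyOn (fun j z => ∑ k : Fin (d+1), (c j k : ℂ) * z^(k:ℕ))
      (fun z => ∑ k : Fin (d+1), (L k : ℂ) * z^(k:ℕ)) Filter.atTop
      (Metric.closedBall 0 2) := by
  rw [Metric.tendstoUniformlyOn_iff]
  intro ε hε
  set δ := ε / ((d+1) * 2^d + 1) with hδdef
  have hδ : 0 < δ := by positivity
  have hev : ∀ᶠ j in Filter.atTop, ∀ k : Fin (d+1), |c j k - L k| < δ := by
    rw [Filter.eventually_all]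
    intro k
    have h0 := (Metric.tendsto_nhds.mp (hc k)) δ hδ
    filter_upwards [h0] with j hj
    simpa [Real.dist_eq] using hj
  filter_upwards [hev] with j hj z hz
  rw [dist_eq_norm, ← Finset.sum_sub_distrib]
  have hz2 : ‖z‖ ≤ 2 := by simpa using hz
  calc ‖∑ k : Fin (d+1), ((L k : ℂ) * z^(k:ℕ) - (c j k : ℂ) * z^(k:ℕ))‖
      ≤ ∑ k : Fin (d+1), ‖((L k : ℂ) - (c j k : ℂ)) * z^(k:ℕ)‖ := by
        refine le_trans (norm_sum_le _ _) (le_of_eq ?_)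
        congr 1; ext k; rw [sub_mul]
    _ ≤ ∑ _k : Fin (d+1), δ * 2^d := by
        apply Finset.sum_le_sum
        intro k _
        rw [norm_mul, norm_pow]
        have h1 : ‖(L k : ℂ) - (c j k : ℂ)‖ ≤ δ := by
          rw [← Complex.ofReal_sub, Complex.norm_real, Real.norm_eq_abs, abs_sub_comm]
          exact le_of_lt (hj k)
        have h2 : ‖z‖^(k:ℕ) ≤ 2^d := by
          calc ‖z‖^(k:ℕ) ≤ 2^(k:ℕ) := pow_le_pow_left₀ (norm_nonneg _) hz2 _
            _ ≤ 2^d := pow_le_pow_right₀ one_le_two (Nat.lt_succ_iff.mp k.isLt)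
        exact mul_le_mul h1 h2 (by positivity) hδ.le
    _ = (d+1) * 2^d * δ := by
        rw [Finset.sum_const, Finset.card_univ, Fintype.card_fin, nsmul_eq_mul]
        push_cast; ring
    _ < ε := by
        rw [hδdef, mul_div_assoc']
        rw [div_lt_iff₀ (by positivity)]
        nlinarith [hε, pow_pos (by norm_num : (0:ℝ) < 2) d]



lemma coeff_ofVec (d : ℕ) (A : Fin (d+1) → ℂ) (k : Fin (d+1)) :
    (∑ i : Fin (d+1), C (A i) * X^(i:ℕ)).coeff (k:ℕ) = A k := by
  rw [Polynomial.finset_sum_coeff]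
  rw [Finset.sum_eq_single k]
  · simp
  · intro i _ hik
    rw [Polynomial.coeff_C_mul, Polynomial.coeff_X_pow, if_neg (by
      simp only [Fin.val_eq_val]; exact (Ne.symm hik)), mul_zero]
  · intro h; exact absurd (mem_univ k) h

lemma eval_ofVec (d : ℕ) (A : Fin (d+1) → ℂ) (z : ℂ) :
    (∑ i : Fin (d+1), C (A i) * X^(i:ℕ)).eval z = ∑ i : Fin (d+1), A i * z^(i:ℕ) := by
  rw [Polynomial.eval_finset_sum]
  congr 1; ext i; simp

lemma natDegree_ofVec (d : ℕ) (A : Fin (d+1) → ℂ) :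
    (∑ i : Fin (d+1), C (A i) * X^(i:ℕ)).natDegree ≤ d := by
  apply Polynomial.natDegree_sum_le_of_forall_le
  intro i _
  refine le_trans (Polynomial.natDegree_C_mul_le _ _) ?_
  rw [Polynomial.natDegree_X_pow]
  exact Nat.lt_succ_iff.mp i.isLt

/-- Compactness for rational functions of bounded degree bounded at `d+1`
well-separated points: a subsequence converges, away from at most `d`
exceptional points of the disk of radius `2`, to a rational function of
degree `≤ d` with poles among those points. -/
theorem stmt_9 (d : ℕ) (P Q : ℕ → Polynomial ℝ)
    (hPdeg : ∀ n, (P n).natDegree ≤ d) (hQdeg : ∀ n, (Q n).natDegree ≤ d)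
    (hPne : ∀ n, ∀ t ∈ Set.Icc (-1 : ℝ) 1, (P n).eval t ≠ 0)
    (C₀ σ : ℝ) (hC₀ : 0 < C₀) (hσ : 0 < σ)
    (t : ℕ → Fin (d + 1) → ℝ)
    (ht : ∀ n i, t n i ∈ Set.Icc (-1 : ℝ) 1)
    (hsep : ∀ n, ∀ i j : Fin (d + 1), i ≠ j → σ < |t n i - t n j|)
    (hbound : ∀ n i, |(Q n).eval (t n i) / (P n).eval (t n i)| ≤ C₀) :
    ∃ φ : ℕ → ℕ, StrictMono φ ∧
      ∃ s : Fin d → ℂ, (∀ i, s i ∈ Metric.closedBall (0 : ℂ) 2) ∧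
        ∃ p q : Polynomial ℂ, p.natDegree ≤ d ∧ q.natDegree ≤ d ∧
          (∀ z ∈ Metric.closedBall (0 : ℂ) 2 \ Set.range s, q.eval z ≠ 0) ∧
          ∀ K : Set ℂ, K ⊆ Metric.closedBall (0 : ℂ) 2 \ Set.range s → IsCompact K →
            TendstoUniformlyOn
              (fun j z => Polynomial.aeval z (Q (φ j)) / Polynomial.aeval z (P (φ j)))
              (fun z => p.eval z / q.eval z) Filter.atTop K := by
  classical
  have hPne0 : ∀ n, P n ≠ 0 := by
    intro n h
    exact hPne n 0 (by norm_num) (by simp [h])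
  set u : ℕ → Fin (d+1) → ℝ := fun n k => (P n).coeff k with hu
  set w : ℕ → Fin (d+1) → ℝ := fun n k => (Q n).coeff k with hw
  set c : ℕ → ℝ := fun n => ‖u n‖ with hcdef
  have hcpos : ∀ n, 0 < c n := by
    intro n
    rw [show c n = ‖u n‖ from rfl, norm_pos_iff]
    intro h
    apply hPne0 n
    have : (P n).coeff (P n).natDegree = 0 := by
      have := congrFun h (⟨(P n).natDegree, Nat.lt_succ_of_le (hPdeg n)⟩ : Fin (d+1))
      simpa [hu] using this
    exact Polynomial.leadingCoeff_eq_zero.mp this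
  -- coefficient bounds for P
  have hcoeffP : ∀ n k, |(P n).coeff k| ≤ c n := by
    intro n k
    by_cases hk : k ≤ d
    · have := norm_le_pi_norm (u n) (⟨k, Nat.lt_succ_of_le hk⟩ : Fin (d+1))
      simpa [hu, Real.norm_eq_abs] using this
    · rw [Polynomial.coeff_eq_zero_of_natDegree_lt (lt_of_le_of_lt (hPdeg n) (by omega)),
        abs_zero]
      exact (hcpos n).le
  -- value bounds for Q at nodes
  have htabs : ∀ n i, |t n i| ≤ 1 := by
    intro n i
    have := ht n i
    rw [Set.mem_Icc] at this
    exact abs_le.mpr this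
  have hQval : ∀ n i, |(Q n).eval (t n i)| ≤ C₀ * ((d+1) * c n) := by
    intro n i
    have hPt : (P n).eval (t n i) ≠ 0 := hPne n _ (ht n i)
    have h1 : |(Q n).eval (t n i)| = |(Q n).eval (t n i) / (P n).eval (t n i)| *
        |(P n).eval (t n i)| := by
      rw [← abs_mul, div_mul_cancel₀ _ hPt]
    rw [h1]
    have h2 : |(P n).eval (t n i)| ≤ (d+1) * c n :=
      eval_abs_le d (P n) (hPdeg n) (c n) (hcoeffP n) (htabs n i)
    exact mul_le_mul (hbound n i) h2 (abs_nonneg _) hC₀.le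
  -- coefficient bounds for Q
  set B : ℝ := (d+1) * (C₀ * ((d+1) * 1)) * (2^d / σ^d) with hBdef
  have hcoeffQ : ∀ n k, |(Q n).coeff k| ≤ B * c n := by
    intro n k
    have := coeff_bound_of_values d (Q n) (hQdeg n) (t n) (htabs n) σ hσ (hsep n)
      (C₀ * ((d+1) * c n)) (hQval n) k
    calc |(Q n).coeff k| ≤ (d+1) * (C₀ * ((d+1) * c n)) * (2^d / σ^d) := this
      _ = B * c n := by rw [hBdef]; ring
  have hB : 0 < B := by rw [hBdef]; positivity
  -- normalized coefficient vectors
  set a : ℕ → Fin (d+1) → ℝ := fun n => (c n)⁻¹ • u n with ha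
  set b : ℕ → Fin (d+1) → ℝ := fun n => (c n)⁻¹ • w n with hb
  have hna : ∀ n, ‖a n‖ = 1 := by
    intro n
    rw [ha]
    simp only [norm_smul, Real.norm_eq_abs, abs_inv, abs_of_pos (hcpos n)]
    exact inv_mul_cancel₀ (hcpos n).ne'
  have hnb : ∀ n, ‖b n‖ ≤ B := by
    intro n
    rw [pi_norm_le_iff_of_nonneg hB.le]
    intro k
    rw [hb]
    simp only [Pi.smul_apply, smul_eq_mul, Real.norm_eq_abs, abs_mul, abs_inv,
      abs_of_pos (hcpos n)]
    rw [inv_mul_le_iff₀ (hcpos n)]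
    calc |w n k| = |(Q n).coeff k| := rfl
      _ ≤ B * c n := hcoeffQ n k
      _ = c n * B := by ring
  -- extract convergent subsequence
  set x : ℕ → (Fin (d+1) → ℝ) × (Fin (d+1) → ℝ) := fun n => (a n, b n) with hx
  have hxmem : ∀ n, x n ∈ Metric.closedBall 0 (max 1 B) := by
    intro n
    rw [Metric.mem_closedBall, dist_zero_right]
    rw [Prod.norm_def]
    apply max_le_max
    · rw [hna n]
    · exact hnb n
  obtain ⟨l, _, φ, hφ, htend⟩ :=
    (isCompact_closedBall (0 : (Fin (d+1) → ℝ) × (Fin (d+1) → ℝ)) (max 1 B)).tendsto_subseq hxmem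
  have hAfull : Tendsto (fun j => a (φ j)) atTop (nhds l.1) :=
    (continuous_fst.tendsto l).comp htend
  have hBfull : Tendsto (fun j => b (φ j)) atTop (nhds l.2) :=
    (continuous_snd.tendsto l).comp htend
  have hAk : ∀ k, Tendsto (fun j => a (φ j) k) atTop (nhds (l.1 k)) :=
    fun k => ((continuous_apply k).tendsto l.1).comp hAfull
  have hBk : ∀ k, Tendsto (fun j => b (φ j) k) atTop (nhds (l.2 k)) :=
    fun k => ((continuous_apply k).tendsto l.2).comp hBfull
  have hnA : ‖l.1‖ = 1 := by
    have h1 : Tendsto (fun j => ‖a (φ j)‖) atTop (nhds ‖l.1‖) :=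
      (continuous_norm.tendsto l.1).comp hAfull
    have h2 : (fun j => ‖a (φ j)‖) = fun _ => 1 := funext fun j => hna (φ j)
    rw [h2] at h1
    exact tendsto_nhds_unique h1 tendsto_const_nhds
  -- limit polynomials
  set q : ℂ[X] := ∑ i : Fin (d+1), C ((l.1 i : ℝ) : ℂ) * X^(i:ℕ) with hq
  set p : ℂ[X] := ∑ i : Fin (d+1), C ((l.2 i : ℝ) : ℂ) * X^(i:ℕ) with hp
  have hq0 : q ≠ 0 := by
    have : l.1 ≠ 0 := by
      intro h; rw [h, norm_zero] at hnA; norm_num at hnA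
    obtain ⟨k, hk⟩ := Function.ne_iff.mp this
    intro h
    apply hk
    have := coeff_ofVec d (fun i => ((l.1 i : ℝ) : ℂ)) k
    rw [← hq, h, Polynomial.coeff_zero] at this
    exact_mod_cast this.symm
  -- exceptional points
  set RS : Finset ℂ := q.roots.toFinset.filter (fun z => z ∈ Metric.closedBall (0:ℂ) 2)
    with hRS
  set L : List ℂ := RS.toList with hL
  have hlen : L.length ≤ d := by
    rw [hL, Finset.length_toList]
    calc RS.card ≤ q.roots.toFinset.card := Finset.card_filter_le _ _
      _ ≤ Multiset.card q.roots := Multiset.toFinset_card_le _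
      _ ≤ q.natDegree := Polynomial.card_roots' q
      _ ≤ d := natDegree_ofVec d _
  set s : Fin d → ℂ := fun i => L.getD i 0 with hs
  have hsball : ∀ i, s i ∈ Metric.closedBall (0:ℂ) 2 := by
    intro i
    show L.getD i 0 ∈ _
    by_cases hi : (i : ℕ) < L.length
    · rw [List.getD_eq_getElem L 0 hi]
      have hmem : L[(i:ℕ)] ∈ L := List.getElem_mem hi
      have h2 : L[(i:ℕ)] ∈ RS := (Finset.mem_toList).mp hmem
      rw [hRS, Finset.mem_filter] at h2
      exact h2.2
    · rw [List.getD_eq_default L 0 (le_of_not_gt hi)]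
      simp
  have hqne : ∀ z ∈ Metric.closedBall (0 : ℂ) 2 \ Set.range s, q.eval z ≠ 0 := by
    rintro z ⟨hzb, hzs⟩ heval
    apply hzs
    have hzr : z ∈ q.roots.toFinset := by
      rw [Multiset.mem_toFinset, Polynomial.mem_roots']
      exact ⟨hq0, heval⟩
    have hzRS : z ∈ RS := by rw [hRS, Finset.mem_filter]; exact ⟨hzr, hzb⟩
    have hzL : z ∈ L := by rw [hL]; exact (Finset.mem_toList).mpr hzRS
    obtain ⟨i, hi, hget⟩ := List.mem_iff_getElem.mp hzL
    refine ⟨⟨i, lt_of_lt_of_le hi hlen⟩, ?_⟩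
    show L.getD i 0 = z
    rw [List.getD_eq_getElem L 0 hi]
    exact hget
  refine ⟨φ, hφ, s, hsball, p, q, natDegree_ofVec d _, natDegree_ofVec d _, hqne, ?_⟩
  intro K hK hKc
  -- the functions agree with normalized ones
  set Nn : ℕ → ℂ → ℂ := fun j z => ∑ k : Fin (d+1), (b (φ j) k : ℂ) * z^(k:ℕ) with hNn
  set Dn : ℕ → ℂ → ℂ := fun j z => ∑ k : Fin (d+1), (a (φ j) k : ℂ) * z^(k:ℕ) with hDn
  have haeval : ∀ (n : ℕ) (f : ℝ[X]), f.natDegree ≤ d → ∀ z : ℂ,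
      (Polynomial.aeval z f : ℂ) = ∑ k : Fin (d+1), (f.coeff k : ℂ) * z^(k:ℕ) := by
    intro n f hf z
    rw [Polynomial.aeval_eq_sum_range' (Nat.lt_succ_of_le hf)]
    rw [← Fin.sum_univ_eq_sum_range (fun i => f.coeff i • z ^ i)]
    refine Finset.sum_congr rfl fun k _ => ?_
    simp [Algebra.smul_def]
  have hfun : (fun j z => (Polynomial.aeval z (Q (φ j)) : ℂ) / Polynomial.aeval z (P (φ j)))
      = fun j z => Nn j z / Dn j z := by
    funext j z
    have hcne : ((c (φ j) : ℝ) : ℂ)⁻¹ ≠ 0 :=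
      inv_ne_zero (by exact_mod_cast (hcpos (φ j)).ne')
    have e1 : Nn j z = (((c (φ j) : ℝ) : ℂ))⁻¹ * Polynomial.aeval z (Q (φ j)) := by
      rw [hNn]
      simp only
      rw [haeval (φ j) (Q (φ j)) (hQdeg (φ j)) z, Finset.mul_sum]
      refine Finset.sum_congr rfl fun k _ => ?_
      simp only [hb, Pi.smul_apply, smul_eq_mul]
      push_cast
      ring
    have e2 : Dn j z = (((c (φ j) : ℝ) : ℂ))⁻¹ * Polynomial.aeval z (P (φ j)) := by
      rw [hDn]
      simp only
      rw [haeval (φ j) (P (φ j)) (hPdeg (φ j)) z, Finset.mul_sum]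
      refine Finset.sum_congr rfl fun k _ => ?_
      simp only [ha, Pi.smul_apply, smul_eq_mul]
      push_cast
      ring
    rw [e1, e2, mul_div_mul_left _ _ hcne]
  rw [hfun]
  -- uniform convergence of numerator and denominator on K
  have hKsub : K ⊆ Metric.closedBall (0:ℂ) 2 := hK.trans Set.diff_subset
  have hNtuo : TendstoUniformlyOn Nn (p.eval) atTop K := by
    have := tuo_poly d (fun j => b (φ j)) l.2 hBk
    have heq : (fun z => ∑ k : Fin (d+1), ((l.2 k : ℝ) : ℂ) * z^(k:ℕ)) = p.eval := by
      funext z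
      rw [hp, eval_ofVec]
    rw [heq] at this
    exact this.mono hKsub
  have hDtuo : TendstoUniformlyOn Dn (q.eval) atTop K := by
    have := tuo_poly d (fun j => a (φ j)) l.1 hAk
    have heq : (fun z => ∑ k : Fin (d+1), ((l.1 k : ℝ) : ℂ) * z^(k:ℕ)) = q.eval := by
      funext z
      rw [hq, eval_ofVec]
    rw [heq] at this
    exact this.mono hKsub
  -- get lower bound on |q| and upper bounds on K
  rcases K.eq_empty_or_nonempty with rfl | hKne
  · exact tuo_div (M := 1) hNtuo hDtuo one_pos (fun z hz => absurd hz (Set.notMem_empty z))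
      (fun z hz => absurd hz (Set.notMem_empty z)) (fun z hz => absurd hz (Set.notMem_empty z))
  obtain ⟨z₁, hz₁K, hz₁min⟩ := hKc.exists_isMinOn hKne
    ((continuous_norm.comp q.continuous).continuousOn)
  have hεpos : 0 < ‖q.eval z₁‖ := norm_pos_iff.mpr (hqne z₁ (hK hz₁K))
  have hgl : ∀ z ∈ K, ‖q.eval z₁‖ ≤ ‖q.eval z‖ := fun z hz => isMinOn_iff.mp hz₁min z hz
  obtain ⟨M₁, hM₁⟩ := hKc.exists_bound_of_continuousOn p.continuous.continuousOn
  obtain ⟨M₂, hM₂⟩ := hKc.exists_bound_of_continuousOn q.continuous.continuousOn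
  exact tuo_div hNtuo hDtuo hεpos hgl
    (fun z hz => le_trans (hM₁ z hz) (le_max_left _ _))
    (fun z hz => le_trans (hM₂ z hz) (le_max_right _ _))
end

section
/- Let P̂, Q̂ : (-r,r) → ℝ be C¹ functions satisfying |P̂'(t)| ≤ c·v^γ and |Q̂'(t)| ≤ c·v^γ for all t ∈ (-r,r), where c > 0, γ ∈ (0,1], and v = min over a nonempty subset of t of (|P̂(t)| + |Q̂(t)|), with v ≤ s := |P̂(0)| + |Q̂(0)|. Then for all t ∈ (-r,r): ||P̂(t)| − |P̂(0)|| ≤ c·v^γ·|t| and |Q̂(t)| ≤ |Q̂(0)| + c·v^γ·|t|. Consequently, if γ₂ > 1/γ + 1 and c₂ > 0 is small enough (depending on c, γ, r), then |P̂(t)| + |Q̂(t)| > c₂·s^{γ₂} for all t ∈ (-r,r) whenever s is sufficiently small. -/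
/-- The Hölder-holonomy estimate: derivative bounds `c·v^γ` for `P̂, Q̂` on
`(-r,r)` yield the Lipschitz-type bounds on `|P̂|` and `|Q̂|`, and
consequently the lower Hölder bound `|P̂(t)| + |Q̂(t)| > c₂·s^{γ₂}` for
`γ₂ > 1/γ + 1` and `s = |P̂(0)| + |Q̂(0)|` sufficiently small. -/
theorem stmt_13 (r c γ v : ℝ) (hr : 0 < r) (hc : 0 < c)
    (hγ : γ ∈ Set.Ioc (0 : ℝ) 1)
    (Ph Qh P' Q' : ℝ → ℝ)
    (hP : ∀ t ∈ Set.Ioo (-r) r, HasDerivAt Ph (P' t) t)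
    (hQ : ∀ t ∈ Set.Ioo (-r) r, HasDerivAt Qh (Q' t) t)
    (hP' : ∀ t ∈ Set.Ioo (-r) r, |P' t| ≤ c * v ^ γ)
    (hQ' : ∀ t ∈ Set.Ioo (-r) r, |Q' t| ≤ c * v ^ γ)
    (hv0 : 0 ≤ v)
    (hvlb : ∀ t ∈ Set.Ioo (-r) r, v ≤ |Ph t| + |Qh t|)
    (hvs : v ≤ |Ph 0| + |Qh 0|)
    (hs : 0 < |Ph 0| + |Qh 0|) :
    (∀ t ∈ Set.Ioo (-r) r,
        abs (|Ph t| - |Ph 0|) ≤ c * v ^ γ * |t| ∧ |Qh t| ≤ |Qh 0| + c * v ^ γ * |t|) ∧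
    ∀ γ₂ : ℝ, 1 / γ + 1 < γ₂ →
      ∃ c₂ > 0, ∃ s₀ > 0, |Ph 0| + |Qh 0| < s₀ →
        ∀ t ∈ Set.Ioo (-r) r, c₂ * (|Ph 0| + |Qh 0|) ^ γ₂ < |Ph t| + |Qh t| := by
  have hγpos : 0 < γ := hγ.1
  have h0mem : (0:ℝ) ∈ Set.Ioo (-r) r := ⟨by linarith, hr⟩
  have hK0 : 0 ≤ c * v ^ γ := mul_nonneg hc.le (Real.rpow_nonneg hv0 γ)
  have key : ∀ (f f' : ℝ → ℝ), (∀ t ∈ Set.Ioo (-r) r, HasDerivAt f (f' t) t) →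
      (∀ t ∈ Set.Ioo (-r) r, |f' t| ≤ c * v ^ γ) →
      ∀ t ∈ Set.Ioo (-r) r, |f t - f 0| ≤ c * v ^ γ * |t| := by
    intro f f' hf hf' t ht
    have := Convex.norm_image_sub_le_of_norm_hasDerivWithin_le
      (f := f) (f' := f') (C := c * v ^ γ) (s := Set.Ioo (-r) r)
      (fun x hx => (hf x hx).hasDerivWithinAt) hf' (convex_Ioo _ _) h0mem ht
    simpa using this
  have keyP := key Ph P' hP hP'
  have keyQ := key Qh Q' hQ hQ'
  refine ⟨?_, ?_⟩
  · intro t ht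
    have hPt := le_trans (abs_abs_sub_abs_le_abs_sub _ _) (keyP t ht)
    have hQt := abs_le.1 (le_trans (abs_abs_sub_abs_le_abs_sub _ _) (keyQ t ht))
    exact ⟨hPt, by linarith [hQt.2]⟩
  · intro γ₂ hγ₂
    set s := |Ph 0| + |Qh 0| with hsdef
    have hγinv : 0 < γ⁻¹ := inv_pos.2 hγpos
    have h4cr : 0 < 4 * c * r := by positivity
    have hA : 0 < (4*c*r) ^ (-γ⁻¹) := Real.rpow_pos_of_pos h4cr _
    refine ⟨min (1/4) ((4*c*r) ^ (-γ⁻¹) / 2), by positivity, 1, one_pos, ?_⟩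
    intro hs1 t ht
    set c₂ := min (1/4 : ℝ) ((4*c*r) ^ (-γ⁻¹) / 2) with hc₂def
    have hc₂pos : 0 < c₂ := by positivity
    have hs1' : s ≤ 1 := hs1.le
    have hγ₂' : γ⁻¹ < γ₂ := by rw [one_div] at hγ₂; linarith
    have hγ₂1 : 1 ≤ γ₂ := by
      have h1γ : 0 < 1/γ := by positivity
      linarith
    by_cases hcase : v ^ γ ≤ s / (4*c*r)
    · -- v small: use Lipschitz bounds
      have hPt := abs_le.1 (le_trans (abs_abs_sub_abs_le_abs_sub _ _) (keyP t ht))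
      have hQt := abs_le.1 (le_trans (abs_abs_sub_abs_le_abs_sub _ _) (keyQ t ht))
      have htr : |t| ≤ r := le_of_lt (abs_lt.2 ⟨ht.1, ht.2⟩)
      have hKt : c * v ^ γ * |t| ≤ c * v ^ γ * r := by
        exact mul_le_mul_of_nonneg_left htr hK0
      have hKr : c * v ^ γ * r ≤ s / 4 := by
        calc c * v ^ γ * r ≤ c * (s/(4*c*r)) * r := by
              have := mul_le_mul_of_nonneg_left hcase hc.le
              exact mul_le_mul_of_nonneg_right this hr.le
          _ = s / 4 := by field_simp
      have hlow : s / 2 ≤ |Ph t| + |Qh t| := by linarith [hPt.1, hQt.1]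
      have hsle : s ^ γ₂ ≤ s := by
        calc s ^ γ₂ ≤ s ^ (1:ℝ) := Real.rpow_le_rpow_of_exponent_ge hs hs1' hγ₂1
          _ = s := Real.rpow_one s
      have : c₂ * s ^ γ₂ ≤ (1/4) * s := by
        have h1 : c₂ ≤ 1/4 := min_le_left _ _
        have h2 : 0 ≤ s ^ γ₂ := Real.rpow_nonneg hs.le _
        calc c₂ * s ^ γ₂ ≤ (1/4) * s ^ γ₂ := mul_le_mul_of_nonneg_right h1 h2
          _ ≤ (1/4) * s := by linarith
      linarith
    · -- v large: use the lower bound v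
      push_neg at hcase
      have hvt := hvlb t ht
      have hbase : 0 ≤ s / (4*c*r) := by positivity
      have h1 : (s/(4*c*r)) ^ γ⁻¹ < v := by
        have h2 : (s/(4*c*r)) ^ γ⁻¹ < (v ^ γ) ^ γ⁻¹ :=
          Real.rpow_lt_rpow hbase hcase hγinv
        rwa [← Real.rpow_mul hv0, mul_inv_cancel₀ hγpos.ne', Real.rpow_one] at h2
      have hsexp : s ^ γ₂ ≤ s ^ γ⁻¹ :=
        Real.rpow_le_rpow_of_exponent_ge hs hs1' hγ₂'.le
      have hspos : 0 < s ^ γ⁻¹ := Real.rpow_pos_of_pos hs _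
      have heq : (s/(4*c*r)) ^ γ⁻¹ = (4*c*r) ^ (-γ⁻¹) * s ^ γ⁻¹ := by
        rw [Real.div_rpow hs.le h4cr.le, Real.rpow_neg h4cr.le]
        ring
      have h3 : c₂ * s ^ γ₂ < (s/(4*c*r)) ^ γ⁻¹ := by
        have hc₂le : c₂ ≤ (4*c*r) ^ (-γ⁻¹) / 2 := min_le_right _ _
        have : c₂ * s ^ γ₂ ≤ ((4*c*r) ^ (-γ⁻¹) / 2) * s ^ γ⁻¹ := by
          calc c₂ * s ^ γ₂ ≤ c₂ * s ^ γ⁻¹ :=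
                mul_le_mul_of_nonneg_left hsexp hc₂pos.le
            _ ≤ ((4*c*r) ^ (-γ⁻¹) / 2) * s ^ γ⁻¹ :=
                mul_le_mul_of_nonneg_right hc₂le hspos.le
        have : ((4*c*r) ^ (-γ⁻¹) / 2) * s ^ γ⁻¹ < (4*c*r) ^ (-γ⁻¹) * s ^ γ⁻¹ := by
          have := mul_lt_mul_of_pos_right (by linarith : (4*c*r) ^ (-γ⁻¹) / 2 < (4*c*r) ^ (-γ⁻¹)) hspos
          linarith
        rw [heq]
        linarith
      linarith
end

section
/- Let h : (-ρ,ρ)² → ℝ be a C^{10ℓ+1} function such that h(t,0) = 0 for all t and |h(t₁,t₃)| ≤ C(|t₁|^{10ℓ} + |t₃|^{10ℓ}) for all (t₁,t₃). Then for all integers i, j ≥ 0 with i + j ≤ ℓ, the partial derivatives satisfy |∂₁^i ∂₃^j h(t₁,t₃)| ≤ C'(|t₁| + |t₃|)^{ℓ+1} on the two coordinate axes {t₃ = 0} ∪ {t₁ = 0}, for some constant C' depending on C, ℓ, ρ and the C^{10ℓ+1} norm of h. -/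
/-!
Write `n = 10ℓ`. The one-variable engine is an interpolation inequality of Markov type: if `v` is
`C^d`, then `r^j |v^{(j)}(y₀)| ≲ sup |v| + r^d sup |v^{(d)}|` on `[y₀, y₀ + r]` for `j < d`. It
follows by comparing `v` with its Taylor polynomial at `d` fixed nodes and bounding the
coefficients of a polynomial of degree `< d` by its values there (Lagrange interpolation).
On a square `[-r, r]²` the flatness hypothesis gives `|h| ≤ 2C r^n`; the inequality in `t₃`
turns this into `|∂₃^j h| ≲ r^{n-j}`, and then in `t₁` into `|∂₁^i ∂₃^j h| ≲ r^{n-i-j}`, where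
`n - i - j ≥ ℓ + 1` once `i + j ≤ ℓ` and `ℓ ≥ 1`. Away from the origin the derivatives are
bounded by compactness.
-/

open Set Finset Polynomial Filter Function
open scoped Nat

theorem abs_sub_sum_taylor_le {v : ℝ → ℝ} {d : ℕ} (hv : ContDiff ℝ (d + 1) v) {y₀ r M : ℝ}
    (hr : 0 < r) (hM : ∀ s ∈ Icc y₀ (y₀ + r), |iteratedDeriv (d + 1) v s| ≤ M) {x : ℝ}
    (hx : x ∈ Icc y₀ (y₀ + r)) :
    |v x - ∑ m ∈ range (d + 1), iteratedDeriv m v y₀ / m ! * (x - y₀) ^ m| ≤ M * r ^ (d + 1) := by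
  have hlt : y₀ < y₀ + r := by linarith
  have hwithin : ∀ m ≤ d + 1, ∀ s ∈ Icc y₀ (y₀ + r),
      iteratedDerivWithin m v (Icc y₀ (y₀ + r)) s = iteratedDeriv m v s := fun m hm s hs =>
    iteratedDerivWithin_eq_iteratedDeriv (uniqueDiffOn_Icc hlt)
      ((hv.of_le (by exact_mod_cast hm)).contDiffAt) hs
  have hrem := taylor_mean_remainder_bound hlt.le hv.contDiffOn hx fun s hs => by
    rw [hwithin _ le_rfl s hs, Real.norm_eq_abs]; exact hM s hs
  rw [taylor_within_apply, Real.norm_eq_abs] at hrem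
  have hsum : ∑ k ∈ range (d + 1),
      ((k ! : ℝ)⁻¹ * (x - y₀) ^ k) • iteratedDerivWithin k v (Icc y₀ (y₀ + r)) y₀ =
      ∑ m ∈ range (d + 1), iteratedDeriv m v y₀ / m ! * (x - y₀) ^ m := by
    refine Finset.sum_congr rfl fun k hk => ?_
    rw [hwithin k (Finset.mem_range.1 hk).le y₀ (left_mem_Icc.2 hlt.le), smul_eq_mul]
    ring
  have hM0 : 0 ≤ M := (abs_nonneg _).trans (hM y₀ (left_mem_Icc.2 hlt.le))
  calc _ ≤ M * (x - y₀) ^ (d + 1) / d ! := hsum ▸ hrem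
    _ ≤ M * (x - y₀) ^ (d + 1) :=
      div_le_self (mul_nonneg hM0 (pow_nonneg (by linarith [hx.1]) _))
        (by exact_mod_cast d.factorial_pos)
    _ ≤ M * r ^ (d + 1) := by gcongr <;> linarith [hx.1, hx.2]

theorem Polynomial.abs_coeff_le_of_abs_eval_le {s : Finset ℝ} {P : ℝ[X]} (hP : P.degree < #s)
    {A : ℝ} (hA : ∀ x ∈ s, |P.eval x| ≤ A) (j : ℕ) :
    |P.coeff j| ≤ A * ∑ x ∈ s, |(Lagrange.basis s id x).coeff j| := by
  have hinterp : P.coeff j = ∑ x ∈ s, P.eval x * (Lagrange.basis s id x).coeff j := by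
    conv_lhs => rw [Lagrange.eq_interpolate (injOn_id _) hP]
    simp [Lagrange.interpolate_apply, coeff_C_mul]
  rw [hinterp, Finset.mul_sum]
  refine (Finset.abs_sum_le_sum_abs _ _).trans (Finset.sum_le_sum fun x hx => ?_)
  rw [abs_mul]
  exact mul_le_mul_of_nonneg_right (hA x hx) (abs_nonneg _)

theorem exists_pow_mul_abs_iteratedDeriv_le {d j : ℕ} (hj : j < d) :
    ∃ K, ∀ v : ℝ → ℝ, ContDiff ℝ d v → ∀ y₀ r A M : ℝ, 0 < r →
      (∀ s ∈ Icc y₀ (y₀ + r), |v s| ≤ A) →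
      (∀ s ∈ Icc y₀ (y₀ + r), |iteratedDeriv d v s| ≤ M) →
      r ^ j * |iteratedDeriv j v y₀| ≤ K * (A + M * r ^ d) := by
  obtain ⟨d, rfl⟩ := Nat.exists_eq_add_one_of_ne_zero (Nat.ne_zero_of_lt hj)
  obtain ⟨s, hs01, hcard⟩ := (Icc_infinite (zero_lt_one' ℝ)).exists_subset_card_eq (d + 1)
  refine ⟨j ! * ∑ x ∈ s, |(Lagrange.basis s id x).coeff j|,
    fun v hv y₀ r A M hr hA hM => ?_⟩
  -- `Q t` is the Taylor polynomial of `v` at `y₀`, evaluated at `y₀ + r t`.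
  set Q : ℝ[X] := ∑ m ∈ range (d + 1), C (iteratedDeriv m v y₀ / m ! * r ^ m) * X ^ m
  have hQcoeff : ∀ k,
      Q.coeff k = if k < d + 1 then iteratedDeriv k v y₀ / k ! * r ^ k else 0 := by
    intro k
    simp only [Q, finsetSum_coeff, coeff_C_mul_X_pow, Finset.sum_ite_eq, Finset.mem_range]
  have hQdeg : Q.degree < #s := by
    rw [hcard, degree_lt_iff_coeff_zero]
    intro k hk
    rw [hQcoeff, if_neg (by omega)]
  have hQnodes : ∀ t ∈ s, |Q.eval t| ≤ A + M * r ^ (d + 1) := by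
    intro t ht
    obtain ⟨ht0, ht1⟩ := hs01 ht
    have hx : y₀ + r * t ∈ Icc y₀ (y₀ + r) := ⟨by nlinarith, by nlinarith⟩
    set T := ∑ m ∈ range (d + 1), iteratedDeriv m v y₀ / m ! * (y₀ + r * t - y₀) ^ m
    have heval : Q.eval t = T := by
      simp only [Q, T, eval_finsetSum, eval_mul, eval_C, eval_pow, eval_X]
      refine Finset.sum_congr rfl fun m _ => ?_
      ring
    calc |Q.eval t| = |v (y₀ + r * t) - (v (y₀ + r * t) - T)| := by rw [heval, sub_sub_cancel]
      _ ≤ |v (y₀ + r * t)| + |v (y₀ + r * t) - T| := abs_sub _ _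
      _ ≤ A + M * r ^ (d + 1) := add_le_add (hA _ hx) (abs_sub_sum_taylor_le hv hr hM hx)
  have hcoeff := Polynomial.abs_coeff_le_of_abs_eval_le hQdeg hQnodes j
  rw [hQcoeff, if_pos hj] at hcoeff
  have hfact : (0 : ℝ) < j ! := by exact_mod_cast j.factorial_pos
  calc r ^ j * |iteratedDeriv j v y₀| = j ! * |iteratedDeriv j v y₀ / j ! * r ^ j| := by
        rw [abs_mul, abs_div, abs_of_pos hfact, abs_of_pos (pow_pos hr j)]
        field_simp
    _ ≤ _ := by rw [mul_assoc]; gcongr; linarith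

theorem ContDiff.uncurry_iteratedDeriv {f : ℝ → ℝ → ℝ} {m j : ℕ}
    (hf : ContDiff ℝ (m + j : ℕ) (uncurry f)) :
    ContDiff ℝ m (uncurry fun p => iteratedDeriv j (f p)) := by
  induction j generalizing f with
  | zero => simpa using hf
  | succ j ih =>
    simp only [iteratedDeriv_succ']
    refine ih ?_
    have hf' : ContDiff ℝ (m + j + 1 : ℕ) (uncurry fun (z : ℝ × ℝ) y => f z.1 y) :=
      hf.comp (contDiff_fst.fst.prodMk contDiff_snd)
    exact (hf'.fderiv (n := (m + j : ℕ)) contDiff_snd (by norm_cast)).clm_apply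
      (contDiff_const (c := (1 : ℝ)))

theorem exists_abs_le_of_continuous_uncurry {g : ℝ → ℝ → ℝ} (hg : Continuous (uncurry g))
    (R : ℝ) : ∃ M, ∀ p y, |p| ≤ R → |y| ≤ R → |g p y| ≤ M := by
  obtain ⟨M, hM⟩ := (isCompact_closedBall (0 : ℝ × ℝ) R).exists_bound_of_continuousOn
    hg.continuousOn
  exact ⟨M, fun p y hp hy => hM (p, y) (by simp [Prod.norm_def, hp, hy])⟩

def BoxBound (g : ℝ → ℝ → ℝ) (k : ℕ) (δ K : ℝ) : Prop :=
  ∀ r ∈ Ioo 0 δ, ∀ p y, |p| ≤ r → |y| ≤ r → |g p y| ≤ K * r ^ k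

theorem BoxBound.flip {g : ℝ → ℝ → ℝ} {k : ℕ} {δ K : ℝ} (hg : BoxBound g k δ K) :
    BoxBound (fun p y => g y p) k δ K :=
  fun r hr p y hp hy => hg r hr y p hy hp

theorem BoxBound.exists_iteratedDeriv {F : ℝ → ℝ → ℝ} {m i : ℕ} {δ A : ℝ}
    (hF : ContDiff ℝ m (uncurry F)) (hflat : BoxBound F m δ A) (hi : i < m) :
    ∃ K, BoxBound (fun p => iteratedDeriv i (F p)) (m - i) (δ / 2) K := by
  obtain ⟨M, hM⟩ := exists_abs_le_of_continuous_uncurry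
    (ContDiff.uncurry_iteratedDeriv (m := 0) (j := m) (by simpa using hF)).continuous δ
  obtain ⟨K, hK⟩ := exists_pow_mul_abs_iteratedDeriv_le hi
  refine ⟨K * (A * 2 ^ m + M), fun r hr p y hp hy => ?_⟩
  obtain ⟨hr0, hrδ⟩ := hr
  have hs : ∀ s ∈ Icc y (y + r), |s| ≤ 2 * r := fun s hs => by
    rw [abs_le] at hp hy ⊢; constructor <;> linarith [hs.1, hs.2]
  have hbound := hK (F p) (hF.comp (contDiff_const.prodMk contDiff_id)) y r (A * 2 ^ m * r ^ m) M
    hr0 (fun s hs' => by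
      calc |F p s| ≤ A * (2 * r) ^ m :=
            hflat (2 * r) ⟨by positivity, by linarith⟩ p s (by linarith) (hs s hs')
        _ = A * 2 ^ m * r ^ m := by ring)
    (fun s hs' => hM p s (by linarith) (by linarith [hs s hs']))
  have hsplit : r ^ m = r ^ i * r ^ (m - i) := by rw [← pow_add, Nat.add_sub_cancel' hi.le]
  refine le_of_mul_le_mul_left ?_ (pow_pos hr0 i)
  calc r ^ i * |iteratedDeriv i (F p) y| ≤ K * (A * 2 ^ m * r ^ m + M * r ^ m) := hbound
    _ = r ^ i * (K * (A * 2 ^ m + M) * r ^ (m - i)) := by rw [hsplit]; ring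

theorem BoxBound.exists_abs_le_mul_pow {g : ℝ → ℝ → ℝ} {k q : ℕ} {δ K : ℝ}
    (hg : Continuous (uncurry g)) (hflat : BoxBound g k δ K) (hδ : 0 < δ) (hqk : q ≤ k) (R : ℝ) :
    ∃ K', ∀ p y, |p| ≤ R → |y| ≤ R → |g p y| ≤ K' * (|p| + |y|) ^ q := by
  obtain ⟨M, hM⟩ := exists_abs_le_of_continuous_uncurry hg R
  refine ⟨max (|K| * δ ^ (k - q)) (M / δ ^ q), fun p y hp hy => ?_⟩
  set s := |p| + |y|
  have hs0 : 0 ≤ s := by positivity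
  rcases lt_or_ge s δ with hsδ | hδs
  · -- let `r ↓ s` in the bound on the squares of radius `r`
    have hnear : |g p y| ≤ K * s ^ k :=
      ge_of_tendsto (((continuous_const.mul (continuous_pow k)).tendsto s).mono_left
          nhdsWithin_le_nhds)
        (eventually_of_mem (Ioo_mem_nhdsGT hsδ) fun r hr =>
          hflat r ⟨hs0.trans_lt hr.1, hr.2⟩ p y (by linarith [hr.1, abs_nonneg y])
            (by linarith [hr.1, abs_nonneg p]))
    calc |g p y| ≤ |K| * (s ^ q * s ^ (k - q)) := by
          rw [← pow_add, Nat.add_sub_cancel' hqk]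
          exact hnear.trans (mul_le_mul_of_nonneg_right (le_abs_self K) (by positivity))
      _ ≤ |K| * (s ^ q * δ ^ (k - q)) := by gcongr
      _ = |K| * δ ^ (k - q) * s ^ q := by ring
      _ ≤ _ := by gcongr; exact le_max_left _ _
  · calc |g p y| ≤ M / δ ^ q * δ ^ q := by
          rw [div_mul_cancel₀ _ (by positivity)]; exact hM p y hp hy
      _ ≤ M / δ ^ q * s ^ q := by
          gcongr
          exact div_nonneg ((abs_nonneg _).trans (hM p y hp hy)) (by positivity)
      _ ≤ _ := by gcongr; exact le_max_right _ _

theorem BoxBound.exists_abs_iteratedDeriv_iteratedDeriv_le {h : ℝ → ℝ → ℝ} {n i j q : ℕ}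
    {ρ A : ℝ} (hh : ContDiff ℝ n (uncurry h)) (hflat : BoxBound h n ρ A) (hρ : 0 < ρ)
    (hij : i + j < n) (hq : q ≤ n - (i + j)) :
    ∃ K, ∀ t₁ t₃, |t₁| ≤ ρ → |t₃| ≤ ρ →
      |iteratedDeriv i (fun x => iteratedDeriv j (h x) t₃) t₁| ≤ K * (|t₁| + |t₃|) ^ q := by
  have hG : ContDiff ℝ (n - j : ℕ) (uncurry fun y x => iteratedDeriv j (h x) y) :=
    (ContDiff.uncurry_iteratedDeriv (by rwa [Nat.sub_add_cancel (by omega)])).comp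
      (contDiff_snd.prodMk contDiff_fst)
  obtain ⟨KA, hA⟩ := hflat.exists_iteratedDeriv hh (i := j) (by omega)
  obtain ⟨KB, hB⟩ := hA.flip.exists_iteratedDeriv hG (i := i) (by omega)
  have hcont : Continuous
      (uncurry fun t₁ t₃ => iteratedDeriv i (fun x => iteratedDeriv j (h x) t₃) t₁) :=
    (ContDiff.uncurry_iteratedDeriv (m := 0) (hG.of_le (by norm_cast; omega))).continuous.comp
      continuous_swap
  exact hB.flip.exists_abs_le_mul_pow hcont (by positivity) (by omega) ρ

theorem stmt_14_general (ℓ : ℕ) (hℓ : 0 < ℓ) (ρ C : ℝ) (hρ : 0 < ρ) (hC : 0 < C)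
    (h : ℝ → ℝ → ℝ)
    (hsmooth : ContDiff ℝ ((10 * ℓ + 1 : ℕ) : ℕ∞) (Function.uncurry h))
    (hbound : ∀ t₁ ∈ Set.Ioo (-ρ) ρ, ∀ t₃ ∈ Set.Ioo (-ρ) ρ,
      |h t₁ t₃| ≤ C * (|t₁| ^ (10 * ℓ) + |t₃| ^ (10 * ℓ))) :
    ∃ C' > 0, ∀ i j : ℕ, i + j ≤ ℓ →
      ∀ t₁ ∈ Set.Ioo (-ρ) ρ, ∀ t₃ ∈ Set.Ioo (-ρ) ρ, (t₁ = 0 ∨ t₃ = 0) →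
        |iteratedDeriv i (fun x => iteratedDeriv j (h x) t₃) t₁| ≤
          C' * (|t₁| + |t₃|) ^ (ℓ + 1) := by
  set n := 10 * ℓ
  have hsm : ContDiff ℝ n (uncurry h) := hsmooth.of_le (by norm_cast; omega)
  have hflat : BoxBound h n ρ (2 * C) := fun r hr p y hp hy => by
    have hmem : ∀ t, |t| ≤ r → t ∈ Ioo (-ρ) ρ := fun t ht =>
      mem_Ioo.2 (abs_lt.1 (ht.trans_lt hr.2))
    calc |h p y| ≤ C * (|p| ^ n + |y| ^ n) := hbound p (hmem p hp) y (hmem y hy)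
      _ ≤ C * (r ^ n + r ^ n) := by gcongr
      _ = 2 * C * r ^ n := by ring
  have hpartial : ∀ p : ℕ × ℕ, p.1 + p.2 ≤ ℓ → ∀ᶠ K in atTop, ∀ t₁ ∈ Ioo (-ρ) ρ, ∀ t₃ ∈ Ioo (-ρ) ρ,
      |iteratedDeriv p.1 (fun x => iteratedDeriv p.2 (h x) t₃) t₁| ≤
        K * (|t₁| + |t₃|) ^ (ℓ + 1) := fun p hp => by
    obtain ⟨K, hK⟩ := hflat.exists_abs_iteratedDeriv_iteratedDeriv_le hsm hρ
      (i := p.1) (j := p.2) (q := ℓ + 1) (by omega) (by omega)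
    filter_upwards [eventually_ge_atTop K] with K' hK' t₁ ht₁ t₃ ht₃
    exact (hK t₁ t₃ (abs_le.2 ⟨ht₁.1.le, ht₁.2.le⟩) (abs_le.2 ⟨ht₃.1.le, ht₃.2.le⟩)).trans
      (by gcongr)
  have hfinite : {p : ℕ × ℕ | p.1 + p.2 ≤ ℓ}.Finite :=
    (Set.finite_Iic (ℓ, ℓ)).subset fun p (hp : p.1 + p.2 ≤ ℓ) => ⟨by omega, by omega⟩
  obtain ⟨C', hC'pos, hC'⟩ :=
    ((eventually_gt_atTop 0).and ((eventually_all_finite hfinite).2 hpartial)).exists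
  exact ⟨C', hC'pos, fun i j hij t₁ ht₁ t₃ ht₃ _ => hC' (i, j) hij t₁ ht₁ t₃ ht₃⟩

/-- High-order flatness transfers to low-order derivatives on the axes: if
`h(t,0) = 0` and `|h| ≤ C(|t₁|^{10ℓ} + |t₃|^{10ℓ})`, then all partial
derivatives `∂₁^i ∂₃^j h` with `i + j ≤ ℓ` are `O((|t₁| + |t₃|)^{ℓ+1})` on
the two coordinate axes. -/
theorem stmt_14 (ℓ : ℕ) (hℓ : 0 < ℓ) (ρ C : ℝ) (hρ : 0 < ρ) (hC : 0 < C)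
    (h : ℝ → ℝ → ℝ)
    (hsmooth : ContDiff ℝ ((10 * ℓ + 1 : ℕ) : ℕ∞) (Function.uncurry h))
    (h0 : ∀ t₁ ∈ Set.Ioo (-ρ) ρ, h t₁ 0 = 0)
    (hbound : ∀ t₁ ∈ Set.Ioo (-ρ) ρ, ∀ t₃ ∈ Set.Ioo (-ρ) ρ,
      |h t₁ t₃| ≤ C * (|t₁| ^ (10 * ℓ) + |t₃| ^ (10 * ℓ))) :
    ∃ C' > 0, ∀ i j : ℕ, i + j ≤ ℓ →
      ∀ t₁ ∈ Set.Ioo (-ρ) ρ, ∀ t₃ ∈ Set.Ioo (-ρ) ρ, (t₁ = 0 ∨ t₃ = 0) →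
        |iteratedDeriv i (fun x => iteratedDeriv j (h x) t₃) t₁| ≤
          C' * (|t₁| + |t₃|) ^ (ℓ + 1) :=
  stmt_14_general ℓ hℓ ρ C hρ hC h hsmooth hbound
end

section
/- Let F = (F₁,F₂,F₃) : U ⊆ ℝ³ → ℝ³ be smooth with F(x₁,0,0) = (λ₁x₁,0,0), ∂₂F₂(x₁,0,0) = λ₂, ∂₃F₃(x₁,0,0) = λ₃, ∂₂F₃(x₁,0,0) = 0, and ∂₃^i F₂(x₁,0,0) = 0 for 1 ≤ i ≤ ℓ. Let γ(t) = (x₁ + O(t), b·t^{ℓ+1} + O(t^{ℓ+2}), c·t + O(t²)) be a smooth curve. Then F ∘ γ, after the reparametrization matching its form, equals (λ₁x₁ + O(t), b'·t^{ℓ+1} + O(t^{ℓ+2}), c'·t + O(t²)) with (b', (c')^{ℓ+1}) = (λ₂·b + (1/(ℓ+1)!)·∂₃^{ℓ+1}F₂(x₁,0,0)·c^{ℓ+1}, λ₃^{ℓ+1}·c^{ℓ+1}); i.e., the induced action on the pair (b, c^{ℓ+1}) is the upper-triangular linear map [[λ₂, (1/(ℓ+1)!)∂₃^{ℓ+1}F₂(x₁,0,0)],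 [0, λ₃^{ℓ+1}]]. -/
/-!
Write `γ = (u, v, s)` and split a component `F` of the map as
`F(u, v, s) = (F(u, v, s) - F(u, 0, s)) + F(u, 0, s)`.

Taylor's theorem in `y`, with `(x, z)` as parameters, gives
`F(u, v, s) - F(u, 0, s) = v · ∂_y F(u, 0, s) + O(v²)`; as `v = b t^(ℓ+1) + O(t^(ℓ+2))` and
`(u, s) = (x₁, 0) + O(t)`, this is `b · ∂_y F(x₁, 0, 0) t^(ℓ+1) + O(t^(ℓ+2))`.
Taylor's theorem in `z`, with `x` as parameter, turns the vanishing of `∂_z^i F(x, 0, 0)`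
for `i ≤ ℓ` and all `x` near `x₁` into
`F(u, 0, s) = ∂_z^(ℓ+1) F(x₁, 0, 0) / (ℓ+1)! · c^(ℓ+1) t^(ℓ+1) + O(t^(ℓ+2))`.
For `F₂` these two expansions give the claim; for `F₃` they are used at order `1` (`ℓ = 0`),
where `∂_y F₃(x₁, 0, 0) = 0`. The Taylor remainders must be bounded uniformly in the
parameters, since `u(t) ≠ x₁`: this follows from the mean value theorem applied inductively
to the `z`-derivatives, which are jointly continuous.
-/

open Asymptotics Filter Function Finset Topology
open scoped ContDiff Nat

section ParametricTaylor

variable {E : Type*} [NormedAddCommGroup E] [NormedSpace ℝ E]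

theorem ContDiff.deriv_uncurry {m : WithTop ℕ∞} {H : E → ℝ → ℝ}
    (hH : ContDiff ℝ (m + 1) (uncurry H)) :
    ContDiff ℝ m fun q : E × ℝ => deriv (H q.1) q.2 :=
  (ContDiff.fderiv (f := fun q : E × ℝ => H q.1)
    (hH.comp (contDiff_fst.prodMap contDiff_id)) contDiff_snd le_rfl).clm_apply contDiff_const

theorem ContDiff.iteratedDeriv_uncurry {m : WithTop ℕ∞} {H : E → ℝ → ℝ} {i : ℕ}
    (hH : ContDiff ℝ (m + i) (uncurry H)) :
    ContDiff ℝ m fun q : E × ℝ => iteratedDeriv i (H q.1) q.2 := by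
  induction i generalizing H with
  | zero => simpa [uncurry_def] using hH
  | succ i ih =>
    simp_rw [iteratedDeriv_succ']
    refine ih (H := fun p => deriv (H p)) (ContDiff.deriv_uncurry ?_)
    simpa [add_assoc] using hH

theorem ContDiff.iteratedDeriv_apply_uncurry {H : E → ℝ → ℝ} (hH : ContDiff ℝ ∞ (uncurry H))
    (i : ℕ) (z : ℝ) : ContDiff ℝ ∞ fun p => iteratedDeriv i (H p) z :=
  (ContDiff.iteratedDeriv_uncurry (by rwa [show (∞ : WithTop ℕ∞) + i = ∞ by norm_cast])).comp
    (contDiff_id.prodMk contDiff_const)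

theorem isBigO_pow_succ_of_deriv {H : E → ℝ → ℝ} (hH : Differentiable ℝ (uncurry H))
    {p₀ : E} {k : ℕ} (h0 : ∀ᶠ p in 𝓝 p₀, H p 0 = 0)
    (hderiv : (fun q : E × ℝ => deriv (H q.1) q.2) =O[𝓝 (p₀, 0)] fun q => q.2 ^ k) :
    uncurry H =O[𝓝 (p₀, 0)] fun q => q.2 ^ (k + 1) := by
  obtain ⟨C, hC0, hC⟩ := hderiv.exists_nonneg
  obtain ⟨ε, hε, hnear⟩ := Metric.eventually_nhds_iff.mp
    (hC.bound.and (continuous_fst.tendsto (p₀, (0 : ℝ)) |>.eventually h0))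
  refine IsBigO.of_bound C ?_
  filter_upwards [Metric.ball_mem_nhds _ hε] with ⟨p, z⟩ hq
  have hseg : ∀ x ∈ Metric.closedBall (0 : ℝ) |z|, dist (p, x) (p₀, 0) < ε := by
    intro x hx
    rw [Metric.mem_ball, Prod.dist_eq] at hq
    rw [Metric.mem_closedBall, dist_zero_right] at hx
    rw [Prod.dist_eq]
    simp only [Real.dist_eq, sub_zero] at hq ⊢
    exact (max_le_max le_rfl hx).trans_lt hq
  have hbound : ∀ x ∈ Metric.closedBall (0 : ℝ) |z|, ‖deriv (H p) x‖ ≤ C * |z| ^ k := by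
    intro x hx
    refine (hnear (hseg x hx)).1.trans (mul_le_mul_of_nonneg_left ?_ hC0)
    rw [norm_pow, Real.norm_eq_abs]
    exact pow_le_pow_left₀ (abs_nonneg x) (by simpa using hx) k
  have hmvt := Convex.norm_image_sub_le_of_norm_deriv_le (f := H p)
    (fun x _ => (hH.comp (differentiable_const p |>.prodMk differentiable_id)).differentiableAt)
    hbound (convex_closedBall 0 |z|) (Metric.mem_closedBall_self (abs_nonneg z))
    (show z ∈ Metric.closedBall (0 : ℝ) |z| by simp)
  rw [(hnear (hseg 0 (Metric.mem_closedBall_self (abs_nonneg z)))).2, sub_zero, sub_zero] at hmvt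
  simpa only [uncurry_apply_pair, norm_pow, Real.norm_eq_abs, pow_succ, abs_mul, abs_pow,
    mul_assoc] using hmvt

theorem isBigO_pow_of_iteratedDeriv_eq_zero {H : E → ℝ → ℝ} (hH : ContDiff ℝ ∞ (uncurry H))
    {p₀ : E} {n : ℕ} (hvan : ∀ᶠ p in 𝓝 p₀, ∀ i ≤ n, iteratedDeriv i (H p) 0 = 0) :
    uncurry H =O[𝓝 (p₀, 0)] fun q => q.2 ^ (n + 1) := by
  induction n generalizing H with
  | zero =>
    refine isBigO_pow_succ_of_deriv (hH.differentiable (by simp))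
      (hvan.mono fun p hp => by simpa using hp 0 le_rfl) ?_
    have hH' := ContDiff.deriv_uncurry (m := ∞) (by simpa using hH)
    simpa using (hH'.continuous.tendsto _).isBigO_one ℝ
  | succ n ih =>
    refine isBigO_pow_succ_of_deriv (hH.differentiable (by simp))
      (hvan.mono fun p hp => by simpa using hp 0 n.succ.zero_le)
      (ih (H := fun p => deriv (H p)) (ContDiff.deriv_uncurry (by simpa using hH)) ?_)
    filter_upwards [hvan] with p hp i hi
    simpa [iteratedDeriv_succ'] using hp (i + 1) (by omega)

theorem isBigO_taylor_remainder {H : E → ℝ → ℝ} (hH : ContDiff ℝ ∞ (uncurry H)) (p₀ : E) (n : ℕ) :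
    (fun q : E × ℝ => H q.1 q.2 - ∑ i ∈ range (n + 1), iteratedDeriv i (H q.1) 0 / i ! * q.2 ^ i)
      =O[𝓝 (p₀, 0)] fun q => q.2 ^ (n + 1) := by
  refine isBigO_pow_of_iteratedDeriv_eq_zero
    (H := fun p z => H p z - ∑ i ∈ range (n + 1), iteratedDeriv i (H p) 0 / i ! * z ^ i)
    (hH.sub (ContDiff.sum fun i _ =>
      (((hH.iteratedDeriv_apply_uncurry i 0).comp contDiff_fst).div_const _).mul
        (contDiff_snd.pow i))) (Eventually.of_forall fun p j hj => ?_)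
  have hHp : ContDiff ℝ ∞ (H p) := hH.comp (contDiff_const.prodMk contDiff_id)
  rw [iteratedDeriv_fun_sub (hHp.contDiffAt.of_le (by exact_mod_cast le_top))
      (ContDiff.contDiffAt (by fun_prop)),
    iteratedDeriv_fun_sum (fun i _ => ContDiff.contDiffAt (by fun_prop))]
  simp only [iteratedDeriv_const_mul_field, iteratedDeriv_fun_pow_zero, Nat.cast_ite,
    Nat.cast_zero, mul_ite, mul_zero, sum_ite_eq, mem_range, Nat.lt_succ_of_le hj, if_true]
  rw [div_mul_cancel₀ _ (Nat.cast_ne_zero.mpr j.factorial_ne_zero), sub_self]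

theorem isBigO_sub_sub_mul_deriv {H : E → ℝ → ℝ} (hH : ContDiff ℝ ∞ (uncurry H)) (p₀ : E) :
    (fun q : E × ℝ => H q.1 q.2 - H q.1 0 - q.2 * deriv (H q.1) 0)
      =O[𝓝 (p₀, 0)] fun q => q.2 ^ 2 := by
  convert isBigO_taylor_remainder hH p₀ 1 using 2 with q
  simp [sum_range_succ]
  ring

end ParametricTaylor

def HasLeadingTerm (f : ℝ → ℝ) (a : ℝ) (k : ℕ) : Prop :=
  (fun t => f t - a * t ^ k) =O[𝓝 0] fun t => t ^ (k + 1)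

theorem isBigO_pow_pow_of_le {m n : ℕ} (h : m ≤ n) :
    (fun t : ℝ => t ^ n) =O[𝓝 0] fun t => t ^ m := by
  rcases h.eq_or_lt with rfl | hlt
  · exact isBigO_refl _ _
  · exact (isLittleO_pow_pow hlt).isBigO

theorem tendsto_nhds_of_isBigO_sub {F : Type*} [NormedAddCommGroup F] {g : ℝ → F} {x : F}
    (hg : (fun t => g t - x) =O[𝓝 0] fun t => t) : Tendsto g (𝓝 0) (𝓝 x) :=
  tendsto_sub_nhds_zero_iff.mp (hg.trans_tendsto tendsto_id)

namespace HasLeadingTerm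

variable {f g : ℝ → ℝ} {a b : ℝ} {k m : ℕ}

theorem isBigO (h : HasLeadingTerm f a k) : f =O[𝓝 0] fun t => t ^ k := by
  simpa using (IsBigO.trans h (isBigO_pow_pow_of_le k.le_succ)).add
    ((isBigO_refl (fun t : ℝ => t ^ k) _).const_mul_left a)

theorem isBigO_id (h : HasLeadingTerm f a (k + 1)) : f =O[𝓝 0] fun t => t := by
  simpa using h.isBigO.trans (isBigO_pow_pow_of_le (m := 1) (by omega))

theorem of_isBigO (h : f =O[𝓝 0] fun t => t ^ (k + 1)) : HasLeadingTerm f 0 k := by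
  simpa [HasLeadingTerm] using h

theorem mono (h : HasLeadingTerm f 0 k) (hmk : m ≤ k) : HasLeadingTerm f 0 m := by
  unfold HasLeadingTerm at *
  simpa using h.trans (isBigO_pow_pow_of_le (Nat.succ_le_succ hmk))

theorem congr (h : HasLeadingTerm f a k) (hfg : f =ᶠ[𝓝 0] g) : HasLeadingTerm g a k :=
  IsBigO.congr' h (hfg.mono fun t ht => by simp only [ht]) EventuallyEq.rfl

theorem add (hf : HasLeadingTerm f a k) (hg : HasLeadingTerm g b k) :
    HasLeadingTerm (fun t => f t + g t) (a + b) k :=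
  (IsBigO.add hf hg).congr_left fun t => by ring

theorem mul (hf : HasLeadingTerm f a m) (hg : HasLeadingTerm g b k) :
    HasLeadingTerm (fun t => f t * g t) (a * b) (m + k) := by
  have h₁ : (fun t => (f t - a * t ^ m) * g t) =O[𝓝 0] fun t => t ^ (m + k + 1) :=
    (IsBigO.mul hf hg.isBigO).congr_right fun t => by ring
  have h₂ : (fun t => a * t ^ m * (g t - b * t ^ k)) =O[𝓝 0] fun t => t ^ (m + k + 1) :=
    (((isBigO_refl (fun t : ℝ => t ^ m) _).const_mul_left a).mul hg).congr_right fun t => by ring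
  exact (h₁.add h₂).congr_left fun t => by ring

theorem pow (hf : HasLeadingTerm f a k) (n : ℕ) :
    HasLeadingTerm (fun t => f t ^ n) (a ^ n) (k * n) := by
  induction n with
  | zero => simpa [HasLeadingTerm] using isBigO_zero _ _
  | succ n ih => simpa only [pow_succ, Nat.mul_succ] using ih.mul hf

end HasLeadingTerm

theorem DifferentiableAt.hasLeadingTerm_comp {F : Type*} [NormedAddCommGroup F] [NormedSpace ℝ F]
    {f : F → ℝ} {x : F} (hf : DifferentiableAt ℝ f x) {g : ℝ → F}
    (hg : (fun t => g t - x) =O[𝓝 0] fun t => t) :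
    HasLeadingTerm (fun t => f (g t)) (f x) 0 := by
  simpa [HasLeadingTerm, comp_def] using
    (hf.isBigO_sub.comp_tendsto (tendsto_nhds_of_isBigO_sub hg)).trans hg

section AlongCurves

variable {E : Type*} [NormedAddCommGroup E] [NormedSpace ℝ E]

theorem hasLeadingTerm_sub_apply_zero {H : E → ℝ → ℝ} (hH : ContDiff ℝ ∞ (uncurry H))
    {P : ℝ → E} {p₀ : E} (hP : (fun t => P t - p₀) =O[𝓝 0] fun t => t)
    {v : ℝ → ℝ} {b : ℝ} {k : ℕ} (hv : HasLeadingTerm v b (k + 1)) :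
    HasLeadingTerm (fun t => H (P t) (v t) - H (P t) 0) (b * deriv (H p₀) 0) (k + 1) := by
  have hvlim : Tendsto v (𝓝 0) (𝓝 0) :=
    hv.isBigO.trans_tendsto ((continuous_pow (k + 1)).tendsto' 0 0 (zero_pow k.succ_ne_zero))
  have hv_sq : (fun t => v t ^ 2) =O[𝓝 0] fun t => t ^ (k + 1 + 1) :=
    (hv.isBigO.pow 2).trans ((isBigO_pow_pow_of_le (by omega)).congr_left fun t => pow_mul t _ 2)
  have hR : HasLeadingTerm
      (fun t => H (P t) (v t) - H (P t) 0 - v t * deriv (H (P t)) 0) 0 (k + 1) :=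
    .of_isBigO ((((isBigO_sub_sub_mul_deriv hH p₀).comp_tendsto
      ((tendsto_nhds_of_isBigO_sub hP).prodMk_nhds hvlim))).trans hv_sq)
  have hD : HasLeadingTerm (fun t => deriv (H (P t)) 0) (deriv (H p₀) 0) 0 := by
    simpa using DifferentiableAt.hasLeadingTerm_comp
      ((hH.iteratedDeriv_apply_uncurry 1 0).differentiable (by simp) p₀) hP
  simpa using hR.add (hv.mul hD)

theorem hasLeadingTerm_apply_of_iteratedDeriv_eq_zero {G : E → ℝ → ℝ}
    (hG : ContDiff ℝ ∞ (uncurry G)) {p₀ : E} {ℓ : ℕ}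
    (hflat : ∀ᶠ p in 𝓝 p₀, ∀ i ≤ ℓ, iteratedDeriv i (G p) 0 = 0)
    {P : ℝ → E} (hP : (fun t => P t - p₀) =O[𝓝 0] fun t => t)
    {s : ℝ → ℝ} {c : ℝ} (hs : HasLeadingTerm s c 1) :
    HasLeadingTerm (fun t => G (P t) (s t))
      (iteratedDeriv (ℓ + 1) (G p₀) 0 / (ℓ + 1)! * c ^ (ℓ + 1)) (ℓ + 1) := by
  have hPlim := tendsto_nhds_of_isBigO_sub hP
  have hsO := hs.isBigO_id
  have hR : HasLeadingTerm (fun t => G (P t) (s t) -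
      ∑ i ∈ range (ℓ + 2), iteratedDeriv i (G (P t)) 0 / i ! * s t ^ i) 0 (ℓ + 1) :=
    .of_isBigO (((isBigO_taylor_remainder hG p₀ (ℓ + 1)).comp_tendsto (hPlim.prodMk_nhds
      (tendsto_nhds_of_isBigO_sub (by simpa using hsO)))).trans (hsO.pow _))
  have hw : HasLeadingTerm (fun t => iteratedDeriv (ℓ + 1) (G (P t)) 0 / (ℓ + 1)!)
      (iteratedDeriv (ℓ + 1) (G p₀) 0 / (ℓ + 1)!) 0 :=
    DifferentiableAt.hasLeadingTerm_comp (f := fun p => iteratedDeriv (ℓ + 1) (G p) 0 / (ℓ + 1)!)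
      (((hG.iteratedDeriv_apply_uncurry _ 0).div_const _).differentiable (by simp) p₀) hP
  have hT : HasLeadingTerm
      (fun t => ∑ i ∈ range (ℓ + 2), iteratedDeriv i (G (P t)) 0 / i ! * s t ^ i)
      (iteratedDeriv (ℓ + 1) (G p₀) 0 / (ℓ + 1)! * c ^ (ℓ + 1)) (ℓ + 1) := by
    have hmain := hw.mul (hs.pow (ℓ + 1))
    rw [zero_add, one_mul] at hmain
    refine hmain.congr ?_
    filter_upwards [hPlim.eventually hflat] with t ht
    rw [sum_range_succ, sum_eq_zero fun i hi => by
      rw [ht i (Nat.lt_succ_iff.mp (mem_range.mp hi)), zero_div, zero_mul], zero_add]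
  simpa using hR.add hT

end AlongCurves

section ChartCoordinates

variable {F : ℝ → ℝ → ℝ → ℝ} {x₁ b c : ℝ} {ℓ : ℕ} {u v s : ℝ → ℝ}

theorem hasLeadingTerm_sub_middle_zero (hF : ContDiff ℝ ∞ fun p : ℝ × ℝ × ℝ => F p.1 p.2.1 p.2.2)
    (hu : (fun t => u t - x₁) =O[𝓝 0] fun t => t) (hv : HasLeadingTerm v b (ℓ + 1))
    (hs : HasLeadingTerm s c 1) :
    HasLeadingTerm (fun t => F (u t) (v t) (s t) - F (u t) 0 (s t))
      (b * deriv (fun y => F x₁ y 0) 0) (ℓ + 1) := by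
  have hP : (fun t => (u t, s t) - (x₁, 0)) =O[𝓝 0] fun t => t :=
    (hu.prod_left hs.isBigO_id).congr_left fun t => by simp
  have hH : ContDiff ℝ ∞ (uncurry fun (q : ℝ × ℝ) y => F q.1 y q.2) :=
    hF.comp ((contDiff_fst.comp contDiff_fst).prodMk (contDiff_snd.prodMk
      (contDiff_snd.comp contDiff_fst)))
  exact hasLeadingTerm_sub_apply_zero hH hP hv

theorem hasLeadingTerm_middle_zero (hF : ContDiff ℝ ∞ fun p : ℝ × ℝ × ℝ => F p.1 p.2.1 p.2.2)
    (hflat : ∀ᶠ x in 𝓝 x₁, ∀ i ≤ ℓ, iteratedDeriv i (fun z => F x 0 z) 0 = 0)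
    (hu : (fun t => u t - x₁) =O[𝓝 0] fun t => t) (hs : HasLeadingTerm s c 1) :
    HasLeadingTerm (fun t => F (u t) 0 (s t))
      (iteratedDeriv (ℓ + 1) (fun z => F x₁ 0 z) 0 / (ℓ + 1)! * c ^ (ℓ + 1)) (ℓ + 1) :=
  hasLeadingTerm_apply_of_iteratedDeriv_eq_zero (G := fun x z => F x 0 z)
    (hF.comp (contDiff_fst.prodMk (contDiff_const.prodMk contDiff_snd))) hflat hu hs

theorem hasLeadingTerm_comp_of_iteratedDeriv_eq_zero
    (hF : ContDiff ℝ ∞ fun p : ℝ × ℝ × ℝ => F p.1 p.2.1 p.2.2)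
    (hflat : ∀ᶠ x in 𝓝 x₁, ∀ i ≤ ℓ, iteratedDeriv i (fun z => F x 0 z) 0 = 0)
    (hu : (fun t => u t - x₁) =O[𝓝 0] fun t => t) (hv : HasLeadingTerm v b (ℓ + 1))
    (hs : HasLeadingTerm s c 1) :
    HasLeadingTerm (fun t => F (u t) (v t) (s t)) (b * deriv (fun y => F x₁ y 0) 0 +
      iteratedDeriv (ℓ + 1) (fun z => F x₁ 0 z) 0 / (ℓ + 1)! * c ^ (ℓ + 1)) (ℓ + 1) := by
  simpa using (hasLeadingTerm_sub_middle_zero hF hu hv hs).add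
    (hasLeadingTerm_middle_zero hF hflat hu hs)

theorem hasLeadingTerm_comp_of_deriv_eq_zero
    (hF : ContDiff ℝ ∞ fun p : ℝ × ℝ × ℝ => F p.1 p.2.1 p.2.2)
    (haxis : ∀ᶠ x in 𝓝 x₁, F x 0 0 = 0) (hcross : deriv (fun y => F x₁ y 0) 0 = 0)
    (hu : (fun t => u t - x₁) =O[𝓝 0] fun t => t) (hv : HasLeadingTerm v b (ℓ + 1))
    (hs : HasLeadingTerm s c 1) :
    HasLeadingTerm (fun t => F (u t) (v t) (s t)) (deriv (fun z => F x₁ 0 z) 0 * c) 1 := by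
  have hy := hasLeadingTerm_sub_middle_zero hF hu hv hs
  rw [hcross, mul_zero] at hy
  have hz := hasLeadingTerm_middle_zero (ℓ := 0) hF
    (haxis.mono fun x hx i hi => by simpa [Nat.le_zero.mp hi] using hx) hu hs
  simpa using (hy.mono (m := 1) (by omega)).add hz

end ChartCoordinates

theorem stmt_19_general (ℓ : ℕ) (lam₁ lam₂ lam₃ : ℝ)
    (F₁ F₂ F₃ : ℝ → ℝ → ℝ → ℝ)
    (hsmooth : ContDiff ℝ (⊤ : ℕ∞)
      (fun p : ℝ × ℝ × ℝ => (F₁ p.1 p.2.1 p.2.2, F₂ p.1 p.2.1 p.2.2, F₃ p.1 p.2.1 p.2.2)))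
    (haxis₁ : ∀ x ∈ Set.Ioo (-1 : ℝ) 1, F₁ x 0 0 = lam₁ * x)
    (haxis₂ : ∀ x ∈ Set.Ioo (-1 : ℝ) 1, F₂ x 0 0 = 0)
    (haxis₃ : ∀ x ∈ Set.Ioo (-1 : ℝ) 1, F₃ x 0 0 = 0)
    (h22 : ∀ x ∈ Set.Ioo (-1 : ℝ) 1, deriv (fun y => F₂ x y 0) 0 = lam₂)
    (h33 : ∀ x ∈ Set.Ioo (-1 : ℝ) 1, deriv (fun z => F₃ x 0 z) 0 = lam₃)
    (h23 : ∀ x ∈ Set.Ioo (-1 : ℝ) 1, deriv (fun y => F₃ x y 0) 0 = 0)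
    (hvan : ∀ x ∈ Set.Ioo (-1 : ℝ) 1, ∀ i : ℕ, 1 ≤ i → i ≤ ℓ →
      iteratedDeriv i (fun z => F₂ x 0 z) 0 = 0)
    (x₁ b c : ℝ) (hx₁ : x₁ ∈ Set.Ioo (-1 : ℝ) 1)
    (γ : ℝ → ℝ × ℝ × ℝ)
    (hγ1 : (fun t => (γ t).1 - x₁) =O[nhds 0] fun t : ℝ => t)
    (hγ2 : (fun t => (γ t).2.1 - b * t ^ (ℓ + 1)) =O[nhds 0] fun t : ℝ => t ^ (ℓ + 2))
    (hγ3 : (fun t => (γ t).2.2 - c * t) =O[nhds 0] fun t : ℝ => t ^ 2) :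
    ((fun t => F₁ (γ t).1 (γ t).2.1 (γ t).2.2 - lam₁ * x₁) =O[nhds 0] fun t : ℝ => t) ∧
    ((fun t => F₂ (γ t).1 (γ t).2.1 (γ t).2.2 -
        (lam₂ * b + (1 / ((ℓ + 1).factorial : ℝ)) *
            iteratedDeriv (ℓ + 1) (fun z => F₂ x₁ 0 z) 0 * c ^ (ℓ + 1)) * t ^ (ℓ + 1))
      =O[nhds 0] fun t : ℝ => t ^ (ℓ + 2)) ∧
    ((fun t => F₃ (γ t).1 (γ t).2.1 (γ t).2.2 - lam₃ * c * t) =O[nhds 0] fun t : ℝ => t ^ 2) := by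
  have hI : ∀ᶠ x in 𝓝 x₁, x ∈ Set.Ioo (-1 : ℝ) 1 := Ioo_mem_nhds hx₁.1 hx₁.2
  have hv : HasLeadingTerm (fun t => (γ t).2.1) b (ℓ + 1) := hγ2
  have hs : HasLeadingTerm (fun t => (γ t).2.2) c 1 := by simpa [HasLeadingTerm] using hγ3
  refine ⟨?_, ?_, ?_⟩
  · have hγ : (fun t => γ t - (x₁, 0, 0)) =O[𝓝 0] fun t => t :=
      (hγ1.prod_left (hv.isBigO_id.prod_left hs.isBigO_id)).congr_left fun t => by ext <;> simp
    simpa [HasLeadingTerm, haxis₁ x₁ hx₁] using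
      ((contDiff_fst.comp hsmooth).differentiable (by simp) (x₁, 0, 0)).hasLeadingTerm_comp hγ
  · have hflat : ∀ᶠ x in 𝓝 x₁, ∀ i ≤ ℓ, iteratedDeriv i (fun z => F₂ x 0 z) 0 = 0 := by
      filter_upwards [hI] with x hx i hi
      rcases i with _ | i
      · simpa using haxis₂ x hx
      · exact hvan x hx _ (by omega) hi
    have h := hasLeadingTerm_comp_of_iteratedDeriv_eq_zero
      (contDiff_fst.comp (contDiff_snd.comp hsmooth)) hflat hγ1 hv hs
    rw [h22 x₁ hx₁] at h
    show HasLeadingTerm _ _ (ℓ + 1)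
    convert h using 1
    ring
  · simpa [HasLeadingTerm, h33 x₁ hx₁, mul_comm] using hasLeadingTerm_comp_of_deriv_eq_zero
      (contDiff_snd.comp (contDiff_snd.comp hsmooth)) (hI.mono haxis₃) (h23 x₁ hx₁) hγ1 hv hs

/-- The action on `(ℓ+1)`-jets of curves (Proposition 3.13): in `ℓ`-good
chart coordinates the dynamics sends a curve of the special form with jet
data `(b, c)` to a curve of the same form with jet data
`(λ₂·b + (1/(ℓ+1)!)·∂₃^{ℓ+1}F₂(x₁,0,0)·c^{ℓ+1}, λ₃·c)`. -/
theorem stmt_19 (ℓ : ℕ) (lam₁ lam₂ lam₃ : ℝ)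
    (F₁ F₂ F₃ : ℝ → ℝ → ℝ → ℝ)
    (hsmooth : ContDiff ℝ (⊤ : ℕ∞)
      (fun p : ℝ × ℝ × ℝ => (F₁ p.1 p.2.1 p.2.2, F₂ p.1 p.2.1 p.2.2, F₃ p.1 p.2.1 p.2.2)))
    (haxis₁ : ∀ x ∈ Set.Ioo (-1 : ℝ) 1, F₁ x 0 0 = lam₁ * x)
    (haxis₂ : ∀ x ∈ Set.Ioo (-1 : ℝ) 1, F₂ x 0 0 = 0)
    (haxis₃ : ∀ x ∈ Set.Ioo (-1 : ℝ) 1, F₃ x 0 0 = 0)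
    (h22 : ∀ x ∈ Set.Ioo (-1 : ℝ) 1, deriv (fun y => F₂ x y 0) 0 = lam₂)
    (h33 : ∀ x ∈ Set.Ioo (-1 : ℝ) 1, deriv (fun z => F₃ x 0 z) 0 = lam₃)
    (h23 : ∀ x ∈ Set.Ioo (-1 : ℝ) 1, deriv (fun y => F₃ x y 0) 0 = 0)
    (hvan : ∀ x ∈ Set.Ioo (-1 : ℝ) 1, ∀ i : ℕ, 1 ≤ i → i ≤ ℓ →
      iteratedDeriv i (fun z => F₂ x 0 z) 0 = 0)
    (x₁ b c : ℝ) (hx₁ : x₁ ∈ Set.Ioo (-1 : ℝ) 1)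
    (γ : ℝ → ℝ × ℝ × ℝ) (hγ : ContDiff ℝ (⊤ : ℕ∞) γ) (hγ0 : γ 0 = (x₁, 0, 0))
    (hγ1 : (fun t => (γ t).1 - x₁) =O[nhds 0] fun t : ℝ => t)
    (hγ2 : (fun t => (γ t).2.1 - b * t ^ (ℓ + 1)) =O[nhds 0] fun t : ℝ => t ^ (ℓ + 2))
    (hγ3 : (fun t => (γ t).2.2 - c * t) =O[nhds 0] fun t : ℝ => t ^ 2) :
    ((fun t => F₁ (γ t).1 (γ t).2.1 (γ t).2.2 - lam₁ * x₁) =O[nhds 0] fun t : ℝ => t) ∧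
    ((fun t => F₂ (γ t).1 (γ t).2.1 (γ t).2.2 -
        (lam₂ * b + (1 / ((ℓ + 1).factorial : ℝ)) *
            iteratedDeriv (ℓ + 1) (fun z => F₂ x₁ 0 z) 0 * c ^ (ℓ + 1)) * t ^ (ℓ + 1))
      =O[nhds 0] fun t : ℝ => t ^ (ℓ + 2)) ∧
    ((fun t => F₃ (γ t).1 (γ t).2.1 (γ t).2.2 - lam₃ * c * t) =O[nhds 0] fun t : ℝ => t ^ 2) :=
  stmt_19_general ℓ lam₁ lam₂ lam₃ F₁ F₂ F₃ hsmooth haxis₁ haxis₂ haxis₃ h22 h33 h23 hvan x₁ b c hx₁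
    γ hγ1 hγ2 hγ3
end
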